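/- arXiv:1304.0580 — 3 statements merged into one kernel-verified Lean document; each statement's English description precedes it below -/
import Mathlib

section
/- Let G be a sub-σ-field of σ(X) with Y ⊥⊥ X | G. Let f : Ω → ℝ be a σ(X)-measurable function in L²(μ) with ∫ f dμ = 0, and suppose that ∫ f·h dμ = 0 for every σ(X)-measurable h : Ω → ℝ in L²(μ) with ∫ h dμ = 0 and μ[h|σ(Y)] = 0 μ-a.e. Then f = μ[f|G] μ-a.e.; in particular, f is μ-a.e. equal to a G-measurable function. -/
/-!
Conditional independence gives `μ[1_B | σ(X)] = μ[1_B | G]` for `B ∈ σ(Y)`, so for a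
`σ(X)`-measurable `f` the residual `r = f - μ[f|G]` satisfies `∫_B r = 0` for every `B ∈ σ(Y)`,
i.e. `μ[r | σ(Y)] = 0`. Being centered, `r` is an admissible test function, so `∫ f r = 0`;
as `r` is also orthogonal to the `G`-measurable `μ[f|G]`, this gives `∫ r² = 0`.
-/

open MeasureTheory ProbabilityTheory

/-- `Y ⊥⊥ X | G` : conditional independence of `Y` and `X` given a sub-σ-field `G`,
as defined in the paper: for all `A ∈ σ(X)` and `B ∈ σ(Y)`,
`μ[1_{A∩B}|G] = μ[1_A|G] ⬝ μ[1_B|G]` a.e.  The ambient σ-field `mΩ` is explicit. -/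
def CondIndepSigma {Ω : Type*} (mΩ : MeasurableSpace Ω) (μ : Measure Ω)
    (mX mY G : MeasurableSpace Ω) : Prop :=
  ∀ A : Set Ω, MeasurableSet[mX] A → ∀ B : Set Ω, MeasurableSet[mY] B →
    condExp G (m₀ := mΩ) μ ((A ∩ B).indicator (fun _ => (1 : ℝ))) =ᵐ[μ]
      fun ω => (condExp G (m₀ := mΩ) μ (A.indicator (fun _ => (1 : ℝ)))) ω *
        (condExp G (m₀ := mΩ) μ (B.indicator (fun _ => (1 : ℝ)))) ω

namespace MeasureTheory

variable {α : Type*} {m m0 : MeasurableSpace α} {μ : Measure α}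

theorem setIntegral_eq_integral_mul_indicator_one {s : Set α} (hs : MeasurableSet s)
    (g : α → ℝ) : ∫ x in s, g x ∂μ = ∫ x, g x * s.indicator (fun _ => (1 : ℝ)) x ∂μ := by
  rw [← integral_indicator hs]
  congr 1 with x
  by_cases hx : x ∈ s <;> simp [hx]

variable [IsFiniteMeasure μ]

theorem integral_mul_condExp_of_stronglyMeasurable (hm : m ≤ m0) {c u : α → ℝ}
    (hc : StronglyMeasurable[m] c) (hc2 : MemLp c 2 μ) (hu : MemLp u 2 μ) :
    ∫ x, c x * u x ∂μ = ∫ x, c x * μ[u|m] x ∂μ :=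
  calc ∫ x, c x * u x ∂μ = ∫ x, μ[c * u|m] x ∂μ := (integral_condExp hm).symm
    _ = ∫ x, c x * μ[u|m] x ∂μ := integral_congr_ae <|
      condExp_mul_of_stronglyMeasurable_left hc (hc2.integrable_mul hu)
        (hu.integrable one_le_two)

theorem integral_condExp_mul_eq_integral_mul_condExp (hm : m ≤ m0) {u v : α → ℝ}
    (hu : MemLp u 2 μ) (hv : MemLp v 2 μ) :
    ∫ x, μ[u|m] x * v x ∂μ = ∫ x, u x * μ[v|m] x ∂μ :=
  calc ∫ x, μ[u|m] x * v x ∂μ = ∫ x, μ[u|m] x * μ[v|m] x ∂μ :=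
        integral_mul_condExp_of_stronglyMeasurable hm stronglyMeasurable_condExp
          (hu.condExp one_le_two) hv
    _ = ∫ x, μ[v|m] x * u x ∂μ := by
        simp_rw [mul_comm (μ[u|m] _)]
        exact (integral_mul_condExp_of_stronglyMeasurable hm stronglyMeasurable_condExp
          (hv.condExp one_le_two) hu).symm
    _ = ∫ x, u x * μ[v|m] x ∂μ := by simp_rw [mul_comm]

theorem condExp_sub_condExp_self (hm : m ≤ m0) {f : α → ℝ} (hf : Integrable f μ) :
    μ[f - μ[f|m]|m] =ᵐ[μ] 0 := by
  filter_upwards [condExp_sub hf (integrable_condExp (m := m) (f := f)) m,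
    condExp_condExp_of_le (f := f) le_rfl hm] with x hsub hidem
  simp only [hsub, Pi.sub_apply, hidem, sub_self, Pi.zero_apply]

theorem ae_eq_condExp_of_integral_mul_sub_condExp_eq_zero (hm : m ≤ m0) {f : α → ℝ}
    (hf : MemLp f 2 μ) (horth : ∫ x, f x * (f - μ[f|m]) x ∂μ = 0) : f =ᵐ[μ] μ[f|m] := by
  set r := f - μ[f|m]
  have hcf : MemLp (μ[f|m]) 2 μ := hf.condExp one_le_two
  have hr : MemLp r 2 μ := hf.sub hcf
  have hcf_orth : ∫ x, μ[f|m] x * r x ∂μ = 0 := by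
    rw [integral_mul_condExp_of_stronglyMeasurable hm stronglyMeasurable_condExp hcf hr]
    refine integral_eq_zero_of_ae ?_
    filter_upwards [condExp_sub_condExp_self hm (hf.integrable one_le_two)] with x hx
    simp [r, hx]
  have hrr : ∫ x, r x * r x ∂μ = 0 := by
    calc ∫ x, r x * r x ∂μ = ∫ x, (f x * r x - μ[f|m] x * r x) ∂μ := by
          congr 1 with x; simp only [r, Pi.sub_apply]; ring
      _ = ∫ x, f x * r x ∂μ - ∫ x, μ[f|m] x * r x ∂μ :=
          integral_sub (hf.integrable_mul hr) (hcf.integrable_mul hr)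
      _ = 0 := by rw [horth, hcf_orth, sub_self]
  have hr0 : r =ᵐ[μ] 0 := by
    filter_upwards [(integral_eq_zero_iff_of_nonneg (fun x => mul_self_nonneg (r x))
      (hr.integrable_mul hr)).mp hrr] with x hx
    exact mul_self_eq_zero.mp hx
  filter_upwards [hr0] with x hx
  exact sub_eq_zero.mp hx

end MeasureTheory

namespace CondIndepSigma

variable {α : Type*} {mX mY G m0 : MeasurableSpace α} {μ : Measure α} [IsFiniteMeasure μ]

theorem condExp_indicator_ae_eq (hCI : CondIndepSigma m0 μ mX mY G) (hG : G ≤ mX)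
    (hmX : mX ≤ m0) (hmY : mY ≤ m0) {B : Set α} (hB : MeasurableSet[mY] B) :
    μ[B.indicator (fun _ => (1 : ℝ))|G] =ᵐ[μ] μ[B.indicator (fun _ => (1 : ℝ))|mX] := by
  have hGm : G ≤ m0 := hG.trans hmX
  have hB2 : MemLp (B.indicator fun _ => (1 : ℝ)) 2 μ := (memLp_const 1).indicator (hmY B hB)
  refine ae_eq_condExp_of_forall_setIntegral_eq hmX (hB2.integrable one_le_two)
    (fun _ _ _ => integrable_condExp.integrableOn) (fun A hA _ => ?_)
    (stronglyMeasurable_condExp.mono hG).aestronglyMeasurable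
  have hA2 : MemLp (A.indicator fun _ => (1 : ℝ)) 2 μ := (memLp_const 1).indicator (hmX A hA)
  calc ∫ x in A, μ[B.indicator fun _ => 1|G] x ∂μ
      = ∫ x, μ[B.indicator fun _ => 1|G] x * A.indicator (fun _ => 1) x ∂μ :=
        setIntegral_eq_integral_mul_indicator_one (hmX A hA) _
    _ = ∫ x, μ[B.indicator fun _ => 1|G] x * μ[A.indicator (fun _ => 1)|G] x ∂μ :=
        integral_mul_condExp_of_stronglyMeasurable hGm stronglyMeasurable_condExp
          (hB2.condExp one_le_two) hA2
    _ = ∫ x, μ[(A ∩ B).indicator fun _ => 1|G] x ∂μ := by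
        refine integral_congr_ae ?_
        filter_upwards [hCI A hA B hB] with x hx
        rw [hx, mul_comm]
    _ = ∫ x in A, B.indicator (fun _ => (1 : ℝ)) x ∂μ := by
        rw [integral_condExp hGm, ← Set.indicator_indicator, integral_indicator (hmX A hA)]

theorem setIntegral_eq_setIntegral_condExp (hCI : CondIndepSigma m0 μ mX mY G) (hG : G ≤ mX)
    (hmX : mX ≤ m0) (hmY : mY ≤ m0) {f : α → ℝ} (hf : StronglyMeasurable[mX] f)
    (hf2 : MemLp f 2 μ) {B : Set α} (hB : MeasurableSet[mY] B) :
    ∫ x in B, f x ∂μ = ∫ x in B, μ[f|G] x ∂μ := by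
  have hB2 : MemLp (B.indicator fun _ => (1 : ℝ)) 2 μ := (memLp_const 1).indicator (hmY B hB)
  calc ∫ x in B, f x ∂μ = ∫ x, f x * B.indicator (fun _ => 1) x ∂μ :=
        setIntegral_eq_integral_mul_indicator_one (hmY B hB) f
    _ = ∫ x, f x * μ[B.indicator (fun _ => 1)|mX] x ∂μ :=
        integral_mul_condExp_of_stronglyMeasurable hmX hf hf2 hB2
    _ = ∫ x, f x * μ[B.indicator (fun _ => 1)|G] x ∂μ := by
        refine integral_congr_ae ?_
        filter_upwards [hCI.condExp_indicator_ae_eq hG hmX hmY hB] with x hx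
        rw [hx]
    _ = ∫ x, μ[f|G] x * B.indicator (fun _ => 1) x ∂μ :=
        (integral_condExp_mul_eq_integral_mul_condExp (hG.trans hmX) hf2 hB2).symm
    _ = ∫ x in B, μ[f|G] x ∂μ := (setIntegral_eq_integral_mul_indicator_one (hmY B hB) _).symm

theorem condExp_sub_condExp_ae_eq_zero (hCI : CondIndepSigma m0 μ mX mY G) (hG : G ≤ mX)
    (hmX : mX ≤ m0) (hmY : mY ≤ m0) {f : α → ℝ} (hf : StronglyMeasurable[mX] f)
    (hf2 : MemLp f 2 μ) : μ[f - μ[f|G]|mY] =ᵐ[μ] 0 := by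
  have hf1 : Integrable f μ := hf2.integrable one_le_two
  refine (ae_eq_condExp_of_forall_setIntegral_eq hmY (hf1.sub integrable_condExp)
    (fun _ _ _ => integrableOn_zero) (fun B hB _ => ?_) aestronglyMeasurable_zero).symm
  rw [integral_sub' hf1.integrableOn integrable_condExp.integrableOn,
    hCI.setIntegral_eq_setIntegral_condExp hG hmX hmY hf hf2 hB, sub_self]
  simp

end CondIndepSigma

theorem regression_class_unbiased_general
    {Ω EX EY : Type*} [mΩ : MeasurableSpace Ω] [mEX : MeasurableSpace EX]
    [mEY : MeasurableSpace EY]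
    (μ : Measure Ω) [IsProbabilityMeasure μ]
    (X : Ω → EX) (Y : Ω → EY) (hX : Measurable X) (hY : Measurable Y)
    (G : MeasurableSpace Ω) (hG : G ≤ MeasurableSpace.comap X mEX)
    (hCI : CondIndepSigma mΩ μ (MeasurableSpace.comap X mEX) (MeasurableSpace.comap Y mEY) G)
    (f : Ω → ℝ) (hf : Measurable[MeasurableSpace.comap X mEX] f)
    (hf2 : MemLp f 2 μ)
    (horth : ∀ h : Ω → ℝ, Measurable[MeasurableSpace.comap X mEX] h → MemLp h 2 μ →
      (∫ ω, h ω ∂μ = 0) → (μ[h|MeasurableSpace.comap Y mEY] =ᵐ[μ] 0) →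
      ∫ ω, f ω * h ω ∂μ = 0) :
    f =ᵐ[μ] μ[f|G] ∧ ∃ g : Ω → ℝ, Measurable[G] g ∧ f =ᵐ[μ] g := by
  have hmX : MeasurableSpace.comap X mEX ≤ mΩ := hX.comap_le
  have hGm : G ≤ mΩ := hG.trans hmX
  have hres_meas : Measurable[MeasurableSpace.comap X mEX] (f - μ[f|G]) :=
    hf.sub (stronglyMeasurable_condExp.measurable.mono hG le_rfl)
  have hres_mean : ∫ ω, (f - μ[f|G]) ω ∂μ = 0 := by
    rw [integral_sub' (hf2.integrable one_le_two) integrable_condExp, integral_condExp hGm,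
      sub_self]
  have hres_cond := hCI.condExp_sub_condExp_ae_eq_zero hG hmX hY.comap_le
    hf.stronglyMeasurable hf2
  have hfeq : f =ᵐ[μ] μ[f|G] := ae_eq_condExp_of_integral_mul_sub_condExp_eq_zero hGm hf2
    (horth _ hres_meas (hf2.sub (hf2.condExp one_le_two)) hres_mean hres_cond)
  exact ⟨hfeq, μ[f|G], stronglyMeasurable_condExp.measurable, hfeq⟩

/-- Unbiasedness (Theorem 2): if `Y ⊥⊥ X | G` and the centered square-integrable
`σ(X)`-measurable function `f` is orthogonal to every centered square-integrable
`σ(X)`-measurable `h` with `E[h|σ(Y)] = 0`, then `f = E[f|G]` a.e.; in particular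
`f` is a.e. equal to a `G`-measurable function. -/
theorem regression_class_unbiased
    {Ω EX EY : Type*} [mΩ : MeasurableSpace Ω] [mEX : MeasurableSpace EX]
    [mEY : MeasurableSpace EY]
    (μ : Measure Ω) [IsProbabilityMeasure μ]
    (X : Ω → EX) (Y : Ω → EY) (hX : Measurable X) (hY : Measurable Y)
    (G : MeasurableSpace Ω) (hG : G ≤ MeasurableSpace.comap X mEX)
    (hCI : CondIndepSigma mΩ μ (MeasurableSpace.comap X mEX) (MeasurableSpace.comap Y mEY) G)
    (f : Ω → ℝ) (hf : Measurable[MeasurableSpace.comap X mEX] f)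
    (hf2 : MemLp f 2 μ) (hf0 : ∫ ω, f ω ∂μ = 0)
    (horth : ∀ h : Ω → ℝ, Measurable[MeasurableSpace.comap X mEX] h → MemLp h 2 μ →
      (∫ ω, h ω ∂μ = 0) → (μ[h|MeasurableSpace.comap Y mEY] =ᵐ[μ] 0) →
      ∫ ω, f ω * h ω ∂μ = 0) :
    f =ᵐ[μ] μ[f|G] ∧ ∃ g : Ω → ℝ, Measurable[G] g ∧ f =ᵐ[μ] g :=
  regression_class_unbiased_general (mΩ := mΩ) (mEX := mEX) (mEY := mEY) μ X Y hX hY G hG hCI f hf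
    hf2 horth
end

section
/- Let G be a sub-σ-field of σ(X) with Y ⊥⊥ X | G, and let f : Ω → ℝ be a σ(X)-measurable function in L²(μ) with μ[f|G] = 0 μ-a.e. Then μ[f|σ(Y)] = 0 μ-a.e. -/
open MeasureTheory ProbabilityTheory

/-!
Conditional independence says that for `B ∈ σ(Y)` the conditional expectation `μ[1_B|σ(X)]` is
already `G`-measurable, namely equal to `μ[1_B|G]`. Hence for `σ(X)`-measurable `f`,
`∫_B f = ∫ μ[1_B|σ(X)] f = ∫ f μ[1_B|G] = ∫ μ[f|G] μ[1_B|G] = 0`, where each step pulls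
a measurable factor out of a conditional expectation (square integrability makes all
products integrable), and vanishing integrals over `σ(Y)`-sets characterise `μ[f|σ(Y)] = 0`.
-/

section

variable {Ω : Type*} {m mΩ : MeasurableSpace Ω} {μ : Measure Ω}

theorem setIntegral_eq_integral_indicator_one_mul {s : Set Ω} (hs : MeasurableSet s)
    (g : Ω → ℝ) :
    ∫ x in s, g x ∂μ = ∫ x, (s.indicator (fun _ => (1 : ℝ)) * g) x ∂μ := by
  rw [← integral_indicator hs]
  congr 1
  funext x
  simp [← Set.indicator_mul_left]

theorem integral_mul_eq_integral_condExp_mul (hm : m ≤ mΩ) [SigmaFinite (μ.trim hm)]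
    {f g : Ω → ℝ} (hg : StronglyMeasurable[m] g) (hfg : Integrable (f * g) μ)
    (hf : Integrable f μ) :
    ∫ x, (f * g) x ∂μ = ∫ x, (μ[f|m] * g) x ∂μ :=
  (integral_condExp hm).symm.trans
    (integral_congr_ae (condExp_mul_of_stronglyMeasurable_right hg hfg hf))

theorem memLp_indicator_one [IsFiniteMeasure μ] {s : Set Ω} (hs : MeasurableSet s) (p : ENNReal) :
    MemLp (s.indicator fun _ => (1 : ℝ)) p μ :=
  memLp_indicator_const p hs 1 (Or.inr (measure_ne_top μ s))

variable [IsFiniteMeasure μ] {mX mY G : MeasurableSpace Ω}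

theorem condExp_indicator_ae_eq_of_condIndepSigma (hG : G ≤ mX) (hmX : mX ≤ mΩ)
    (hmY : mY ≤ mΩ) (hCI : CondIndepSigma mΩ μ mX mY G) {B : Set Ω}
    (hB : MeasurableSet[mY] B) :
    μ[B.indicator (fun _ => (1 : ℝ))|G] =ᵐ[μ] μ[B.indicator (fun _ => (1 : ℝ))|mX] := by
  refine ae_eq_condExp_of_forall_setIntegral_eq hmX ((integrable_const 1).indicator (hmY B hB))
    (fun _ _ _ => integrable_condExp.integrableOn) (fun A hA _ => ?_)
    (stronglyMeasurable_condExp.mono hG).aestronglyMeasurable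
  have hAΩ := hmX A hA
  have hB2 : MemLp (μ[B.indicator (fun _ => (1 : ℝ))|G]) 2 μ :=
    (memLp_indicator_one (hmY B hB) 2).condExp one_le_two
  calc ∫ x in A, μ[B.indicator (fun _ => (1 : ℝ))|G] x ∂μ
      = ∫ x, (A.indicator (fun _ => (1 : ℝ)) *
          μ[B.indicator (fun _ => (1 : ℝ))|G]) x ∂μ :=
        setIntegral_eq_integral_indicator_one_mul hAΩ _
    _ = ∫ x, (μ[A.indicator (fun _ => (1 : ℝ))|G] *
          μ[B.indicator (fun _ => (1 : ℝ))|G]) x ∂μ :=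
        integral_mul_eq_integral_condExp_mul (hG.trans hmX) stronglyMeasurable_condExp
          ((memLp_indicator_one hAΩ 2).integrable_mul hB2)
          ((integrable_const 1).indicator hAΩ)
    _ = ∫ x, μ[(A ∩ B).indicator (fun _ => (1 : ℝ))|G] x ∂μ :=
        integral_congr_ae (hCI A hA B hB).symm
    _ = ∫ x in A, B.indicator (fun _ => (1 : ℝ)) x ∂μ := by
        rw [integral_condExp (hG.trans hmX), ← integral_indicator hAΩ, Set.indicator_indicator]

theorem setIntegral_eq_zero_of_condIndepSigma (hG : G ≤ mX) (hmX : mX ≤ mΩ) (hmY : mY ≤ mΩ)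
    (hCI : CondIndepSigma mΩ μ mX mY G) {f : Ω → ℝ} (hf : StronglyMeasurable[mX] f)
    (hf2 : MemLp f 2 μ) (hfG : μ[f|G] =ᵐ[μ] 0) {B : Set Ω} (hB : MeasurableSet[mY] B) :
    ∫ x in B, f x ∂μ = 0 := by
  have hBΩ := hmY B hB
  have hf1 : Integrable f μ := hf2.integrable one_le_two
  have hB2 : MemLp (μ[B.indicator (fun _ => (1 : ℝ))|G]) 2 μ :=
    (memLp_indicator_one hBΩ 2).condExp one_le_two
  calc ∫ x in B, f x ∂μ
      = ∫ x, (B.indicator (fun _ => (1 : ℝ)) * f) x ∂μ :=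
        setIntegral_eq_integral_indicator_one_mul hBΩ f
    _ = ∫ x, (μ[B.indicator (fun _ => (1 : ℝ))|mX] * f) x ∂μ :=
        integral_mul_eq_integral_condExp_mul hmX hf
          ((memLp_indicator_one hBΩ 2).integrable_mul hf2) ((integrable_const 1).indicator hBΩ)
    _ = ∫ x, (f * μ[B.indicator (fun _ => (1 : ℝ))|G]) x ∂μ := by
        refine integral_congr_ae ?_
        filter_upwards [condExp_indicator_ae_eq_of_condIndepSigma hG hmX hmY hCI hB] with x hx
        simp only [Pi.mul_apply, hx, mul_comm]
    _ = ∫ x, (μ[f|G] * μ[B.indicator (fun _ => (1 : ℝ))|G]) x ∂μ :=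
        integral_mul_eq_integral_condExp_mul (hG.trans hmX) stronglyMeasurable_condExp
          (hf2.integrable_mul hB2) hf1
    _ = 0 := integral_eq_zero_of_ae (by filter_upwards [hfG] with x hx; simp [hx])

end

/-- If `Y ⊥⊥ X | G` and a square-integrable `σ(X)`-measurable `f` satisfies
`E[f|G] = 0` a.e., then `E[f|σ(Y)] = 0` a.e. -/
theorem condexp_given_Y_eq_zero_of_condexp_given_G_eq_zero
    {Ω EX EY : Type*} [mΩ : MeasurableSpace Ω] [mEX : MeasurableSpace EX]
    [mEY : MeasurableSpace EY]
    (μ : Measure Ω) [IsProbabilityMeasure μ]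
    (X : Ω → EX) (Y : Ω → EY) (hX : Measurable X) (hY : Measurable Y)
    (G : MeasurableSpace Ω) (hG : G ≤ MeasurableSpace.comap X mEX)
    (hCI : CondIndepSigma mΩ μ (MeasurableSpace.comap X mEX) (MeasurableSpace.comap Y mEY) G)
    (f : Ω → ℝ) (hf : Measurable[MeasurableSpace.comap X mEX] f)
    (hf2 : MemLp f 2 μ) (hfG : μ[f|G] =ᵐ[μ] 0) :
    μ[f|MeasurableSpace.comap Y mEY] =ᵐ[μ] 0 :=
  (ae_eq_condExp_of_forall_setIntegral_eq hY.comap_le (hf2.integrable one_le_two)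
    (fun _ _ _ => integrableOn_zero)
    (fun _ hB _ => (integral_zero _ _).trans (setIntegral_eq_zero_of_condIndepSigma hG
      hX.comap_le hY.comap_le hCI hf.stronglyMeasurable hf2 hfG hB).symm)
    aestronglyMeasurable_zero).symm
end

section
/- Let G be a sub-σ-field of σ(X) with Y ⊥⊥ X | G, and let f : Ω → ℝ be a σ(X)-measurable, μ-integrable function. Then μ[f | σ(Y) ⊔ G] = μ[f | G] μ-a.e., where σ(Y) ⊔ G denotes the σ-field generated by σ(Y) and G. -/
/-!
Since `G ≤ σ(X)`, conditional independence gives `μ[1_B | σ(X)] = μ[1_B | G]` for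
`B ∈ σ(Y)`: both sides have the integral `μ(A ∩ B)` over every `A ∈ σ(X)`. Pulling the bounded
`G`-measurable factor `μ[1_B | G]` in and out of conditional expectations then gives
`∫_{B ∩ C} f = ∫_{B ∩ C} μ[f | G]` for `B ∈ σ(Y)` and `C ∈ G`. These sets form a π-system
generating `σ(Y) ⊔ G`, so the identity holds on all of `σ(Y) ⊔ G`, which characterises
`μ[f | σ(Y) ⊔ G]`.
-/

open MeasureTheory ProbabilityTheory

open Set

lemma Set.indicator_eq_mul_indicator_one {α M₀ : Type*} [MulZeroOneClass M₀] (s : Set α)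
    (f : α → M₀) : s.indicator f = f * s.indicator 1 := by
  ext x; by_cases hx : x ∈ s <;> simp [hx]

lemma IsPiSystem.image2_inter {α : Type*} {C D : Set (Set α)} (hC : IsPiSystem C)
    (hD : IsPiSystem D) : IsPiSystem (image2 (· ∩ ·) C D) := by
  rintro _ ⟨s₁, hs₁, t₁, ht₁, rfl⟩ _ ⟨s₂, hs₂, t₂, ht₂, rfl⟩ hst
  rw [inter_inter_inter_comm] at hst ⊢
  exact mem_image2_of_mem (hC _ hs₁ _ hs₂ (hst.mono inter_subset_left))
    (hD _ ht₁ _ ht₂ (hst.mono inter_subset_right))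

lemma MeasurableSpace.generateFrom_image2_inter_measurableSet {α : Type*}
    (m₁ m₂ : MeasurableSpace α) :
    generateFrom (image2 (· ∩ ·) {s | MeasurableSet[m₁] s} {t | MeasurableSet[m₂] t})
      = m₁ ⊔ m₂ := by
  refine le_antisymm (generateFrom_le ?_) (sup_le (fun s hs => ?_) fun t ht => ?_)
  · rintro _ ⟨s, hs, t, ht, rfl⟩
    exact (le_sup_left (b := m₂) _ hs).inter (le_sup_right (a := m₁) _ ht)
  · exact measurableSet_generateFrom ⟨s, hs, univ, .univ, inter_univ s⟩
  · exact measurableSet_generateFrom ⟨univ, .univ, t, ht, univ_inter t⟩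

lemma setIntegral_eq_of_isPiSystem {α E : Type*} [NormedAddCommGroup E] [NormedSpace ℝ E]
    {m : MeasurableSpace α} [mα : MeasurableSpace α] {μ : Measure α} (hm : m ≤ mα)
    {S : Set (Set α)} (h_eq : m = MeasurableSpace.generateFrom S) (h_inter : IsPiSystem S)
    {f g : α → E} (hf : Integrable f μ) (hg : Integrable g μ)
    (h_univ : ∫ x, f x ∂μ = ∫ x, g x ∂μ) (basic : ∀ t ∈ S, ∫ x in t, f x ∂μ = ∫ x in t, g x ∂μ)
    {t : Set α} (ht : MeasurableSet[m] t) : ∫ x in t, f x ∂μ = ∫ x in t, g x ∂μ := by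
  induction t, ht using MeasurableSpace.induction_on_inter h_eq h_inter with
  | empty => simp
  | basic t ht => exact basic t ht
  | compl t ht ih =>
    rw [← integral_add_compl (hm _ ht) hf, ← integral_add_compl (hm _ ht) hg, ih] at h_univ
    exact add_left_cancel h_univ
  | iUnion s hd hs ih =>
    rw [integral_iUnion (fun i => hm _ (hs i)) hd hf.integrableOn,
      integral_iUnion (fun i => hm _ (hs i)) hd hg.integrableOn]
    exact tsum_congr ih

section CondExp

variable {Ω : Type*} {m : MeasurableSpace Ω} [mΩ : MeasurableSpace Ω] {μ : Measure Ω}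

lemma integral_mul_condExp_of_stronglyMeasurable (hm : m ≤ mΩ) [SigmaFinite (μ.trim hm)]
    {g φ : Ω → ℝ} (hg : StronglyMeasurable[m] g) (hgφ : Integrable (g * φ) μ)
    (hφ : Integrable φ μ) : ∫ ω, g ω * (μ[φ|m]) ω ∂μ = ∫ ω, g ω * φ ω ∂μ :=
  (integral_congr_ae (condExp_mul_of_stronglyMeasurable_left hg hgφ hφ)).symm.trans
    (integral_condExp hm)

lemma integral_mul_condExp_of_bound (hm : m ≤ mΩ) [IsFiniteMeasure μ] {g φ : Ω → ℝ}
    (hg : StronglyMeasurable[m] g) (c : ℝ) (hg_bound : ∀ᵐ ω ∂μ, ‖g ω‖ ≤ c)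
    (hφ : Integrable φ μ) : ∫ ω, g ω * (μ[φ|m]) ω ∂μ = ∫ ω, g ω * φ ω ∂μ :=
  (integral_congr_ae (condExp_stronglyMeasurable_mul_of_bound hm hg hφ c hg_bound)).symm.trans
    (integral_condExp hm)

lemma ae_norm_condExp_indicator_one_le (s : Set Ω) :
    ∀ᵐ ω ∂μ, ‖(μ[s.indicator (1 : Ω → ℝ)|m]) ω‖ ≤ 1 :=
  ae_bdd_norm_condExp_of_ae_bdd_norm <| ae_of_all _ fun ω => by
    by_cases hω : ω ∈ s <;> simp [hω]

end CondExp

section CondIndepSigma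

variable {Ω : Type*} {mX mY G : MeasurableSpace Ω} [mΩ : MeasurableSpace Ω] {μ : Measure Ω}
  [IsFiniteMeasure μ]

theorem condExp_indicator_eq_of_condIndepSigma (hXm : mX ≤ mΩ) (hYm : mY ≤ mΩ) (hG : G ≤ mX)
    (hCI : CondIndepSigma mΩ μ mX mY G) {B : Set Ω} (hB : MeasurableSet[mY] B) :
    μ[B.indicator (1 : Ω → ℝ)|mX] =ᵐ[μ] μ[B.indicator 1|G] := by
  have hGm : G ≤ mΩ := hG.trans hXm
  have hBi : Integrable (B.indicator (1 : Ω → ℝ)) μ := (integrable_const 1).indicator (hYm _ hB)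
  refine (ae_eq_condExp_of_forall_setIntegral_eq hXm hBi
    (fun _ _ _ => integrable_condExp.integrableOn) (fun A hA _ => ?_)
    (stronglyMeasurable_condExp.mono hG).aestronglyMeasurable).symm
  have hAi : Integrable (A.indicator (1 : Ω → ℝ)) μ := (integrable_const 1).indicator (hXm _ hA)
  calc ∫ ω in A, (μ[B.indicator (1 : Ω → ℝ)|G]) ω ∂μ
      = ∫ ω, (μ[B.indicator 1|G]) ω * A.indicator 1 ω ∂μ := by
        rw [← integral_indicator (hXm _ hA), indicator_eq_mul_indicator_one]; rfl
    _ = ∫ ω, (μ[B.indicator 1|G]) ω * (μ[A.indicator 1|G]) ω ∂μ :=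
        (integral_mul_condExp_of_bound hGm stronglyMeasurable_condExp 1
          (ae_norm_condExp_indicator_one_le B) hAi).symm
    _ = ∫ ω, (μ[(A ∩ B).indicator 1|G]) ω ∂μ := by
        refine integral_congr_ae ?_
        filter_upwards [hCI A hA B hB] with ω hω
        exact (mul_comm _ _).trans hω.symm
    _ = ∫ ω in A, B.indicator 1 ω ∂μ := by
        rw [integral_condExp hGm, ← indicator_indicator, integral_indicator (hXm _ hA)]

theorem setIntegral_inter_eq_setIntegral_condExp_of_condIndepSigma (hXm : mX ≤ mΩ)
    (hYm : mY ≤ mΩ) (hG : G ≤ mX) (hCI : CondIndepSigma mΩ μ mX mY G) {f : Ω → ℝ}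
    (hf : StronglyMeasurable[mX] f) (hfi : Integrable f μ) {B C : Set Ω}
    (hB : MeasurableSet[mY] B) (hC : MeasurableSet[G] C) :
    ∫ ω in B ∩ C, f ω ∂μ = ∫ ω in B ∩ C, (μ[f|G]) ω ∂μ := by
  have hGm : G ≤ mΩ := hG.trans hXm
  have hBC : MeasurableSet (B ∩ C) := (hYm _ hB).inter (hGm _ hC)
  have hBi : Integrable (B.indicator (1 : Ω → ℝ)) μ := (integrable_const 1).indicator (hYm _ hB)
  have h_inter (h : Ω → ℝ) : (B ∩ C).indicator h = C.indicator h * B.indicator 1 := by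
    rw [← indicator_indicator, indicator_eq_mul_indicator_one]
  calc ∫ ω in B ∩ C, f ω ∂μ
      = ∫ ω, C.indicator f ω * B.indicator 1 ω ∂μ := by
        rw [← integral_indicator hBC, h_inter]; rfl
    _ = ∫ ω, C.indicator f ω * (μ[B.indicator 1|mX]) ω ∂μ :=
        (integral_mul_condExp_of_stronglyMeasurable hXm (hf.indicator (hG _ hC))
          (h_inter f ▸ hfi.indicator hBC) hBi).symm
    _ = ∫ ω, (μ[B.indicator 1|G]) ω * C.indicator f ω ∂μ := by
        refine integral_congr_ae ?_
        filter_upwards [condExp_indicator_eq_of_condIndepSigma hXm hYm hG hCI hB] with ω hω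
        rw [hω, mul_comm]
    _ = ∫ ω, (μ[B.indicator 1|G]) ω * (μ[C.indicator f|G]) ω ∂μ :=
        (integral_mul_condExp_of_bound hGm stronglyMeasurable_condExp 1
          (ae_norm_condExp_indicator_one_le B) (hfi.indicator (hGm _ hC))).symm
    _ = ∫ ω, C.indicator (μ[f|G]) ω * (μ[B.indicator 1|G]) ω ∂μ := by
        refine integral_congr_ae ?_
        filter_upwards [condExp_indicator hfi hC] with ω hω
        rw [hω, mul_comm]
    _ = ∫ ω, C.indicator (μ[f|G]) ω * B.indicator 1 ω ∂μ :=
        integral_mul_condExp_of_stronglyMeasurable hGm (stronglyMeasurable_condExp.indicator hC)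
          (h_inter _ ▸ integrable_condExp.indicator hBC) hBi
    _ = ∫ ω in B ∩ C, (μ[f|G]) ω ∂μ := by
        rw [← integral_indicator hBC, h_inter]; rfl

theorem condExp_sup_eq_condExp_of_condIndepSigma (hXm : mX ≤ mΩ) (hYm : mY ≤ mΩ) (hG : G ≤ mX)
    (hCI : CondIndepSigma mΩ μ mX mY G) {f : Ω → ℝ} (hf : StronglyMeasurable[mX] f)
    (hfi : Integrable f μ) : μ[f|mY ⊔ G] =ᵐ[μ] μ[f|G] := by
  have hGm : G ≤ mΩ := hG.trans hXm
  have hm : mY ⊔ G ≤ mΩ := sup_le hYm hGm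
  refine (ae_eq_condExp_of_forall_setIntegral_eq hm hfi
    (fun _ _ _ => integrable_condExp.integrableOn) (fun t ht _ => ?_)
    (stronglyMeasurable_condExp.mono (le_sup_right : G ≤ mY ⊔ G)).aestronglyMeasurable).symm
  refine (setIntegral_eq_of_isPiSystem hm
    (MeasurableSpace.generateFrom_image2_inter_measurableSet mY G).symm
    ((@MeasurableSpace.isPiSystem_measurableSet Ω mY).image2_inter
      (@MeasurableSpace.isPiSystem_measurableSet Ω G))
    hfi integrable_condExp (integral_condExp hGm).symm ?_ ht).symm
  rintro _ ⟨B, hB, C, hC, rfl⟩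
  exact setIntegral_inter_eq_setIntegral_condExp_of_condIndepSigma hXm hYm hG hCI hf hfi hB hC

end CondIndepSigma

/-- If `Y ⊥⊥ X | G` then for any integrable `σ(X)`-measurable `f`,
`E[f | σ(Y) ⊔ G] = E[f | G]` a.e. -/
theorem condexp_join_eq_condexp_of_condIndep
    {Ω EX EY : Type*} [mΩ : MeasurableSpace Ω] [mEX : MeasurableSpace EX]
    [mEY : MeasurableSpace EY]
    (μ : Measure Ω) [IsProbabilityMeasure μ]
    (X : Ω → EX) (Y : Ω → EY) (hX : Measurable X) (hY : Measurable Y)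
    (G : MeasurableSpace Ω) (hG : G ≤ MeasurableSpace.comap X mEX)
    (hCI : CondIndepSigma mΩ μ (MeasurableSpace.comap X mEX) (MeasurableSpace.comap Y mEY) G)
    (f : Ω → ℝ) (hf : Measurable[MeasurableSpace.comap X mEX] f)
    (hfi : Integrable f μ) :
    μ[f|MeasurableSpace.comap Y mEY ⊔ G] =ᵐ[μ] μ[f|G] :=
  -- `G` is a local instance here, so the ambient σ-field has to be named
  condExp_sup_eq_condExp_of_condIndepSigma (mΩ := mΩ) hX.comap_le hY.comap_le hG hCI
    (Measurable.stronglyMeasurable hf) hfi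
end
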